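/- With the same hypotheses but assuming additionally the derivative bounds |φ_I'(t)| ≤ |I|^{-2}(1+|I|^{-1}|t−c(I)|)^{-N} for all dyadic I, one has for all x ≠ t: ∫_ℝ (∑_{I dyadic} (φ_I'(t))² ψ_I(x)² χ_I(y)/|I|)^{1/2} dy ≤ C/|x − t|². -/

import Mathlib

/-!
Taking square roots term by term (`√(∑ aᵢ) ≤ ∑ √aᵢ`) and integrating in `y`, the integral is at
most `∑_I |φ_I'(t)| |ψ_I(x)| |I|^{1/2} ≤ ∑_I |I|⁻² ρ_I(t)⁻³ ρ_I(x)⁻³`, where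
`ρ_I(z) = 1 + |I|⁻¹ |z - c(I)|`. Since `ρ_I(x) + ρ_I(t) ≥ 1 + |I|⁻¹ |x - t|`, the larger of the two
factors supplies the decay `(1 + |I|⁻¹ |x - t|)⁻³`, and the smaller one leaves `ρ⁻²`, whose sum over
the intervals of a fixed length is bounded uniformly. What remains is the sum over scales
`∑_j 2^j / (2^j + |x - t|)³ ≲ |x - t|⁻²`. Both sums over `ℤ` are bounded by telescoping.
-/

open Real MeasureTheory

structure DyadicI where
  j : ℤ
  k : ℤ

namespace DyadicI

/-- The length `2^j` of a dyadic interval. -/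
noncomputable def len (I : DyadicI) : ℝ := (2 : ℝ) ^ I.j

/-- The underlying set `[k·2^j, (k+1)·2^j)` of a dyadic interval. -/
def toSet (I : DyadicI) : Set ℝ :=
  Set.Ico ((I.k : ℝ) * (2 : ℝ) ^ I.j) (((I.k : ℝ) + 1) * (2 : ℝ) ^ I.j)

/-- The center of a dyadic interval. -/
noncomputable def center (I : DyadicI) : ℝ := ((I.k : ℝ) + 1/2) * (2 : ℝ) ^ I.j

/-- The diameter of the union of two dyadic intervals. -/
noncomputable def diamUnion (I J : DyadicI) : ℝ :=
  max (((I.k : ℝ) + 1) * (2 : ℝ) ^ I.j) (((J.k : ℝ) + 1) * (2 : ℝ) ^ J.j)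
    - min ((I.k : ℝ) * (2 : ℝ) ^ I.j) ((J.k : ℝ) * (2 : ℝ) ^ J.j)

end DyadicI

theorem Finset.sum_Ico_sub_int {M : Type*} [AddCommGroup M] (h : ℤ → M) {a b : ℤ} (hab : a ≤ b) :
    ∑ j ∈ Finset.Ico a b, (h j - h (j + 1)) = h a - h b := by
  induction b, hab using Int.leInduction with
  | base => simp
  | succ b hab ih => rw [← Finset.sum_Ico_add_eq_sum_Ico_add_one hab, ih]; abel

theorem ENNReal.tsum_ofReal_le_of_telescoping {f h : ℤ → ℝ} {M : ℝ} (hf₀ : ∀ j, 0 ≤ f j)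
    (hf : ∀ j, f j ≤ h j - h (j + 1)) (hM : ∀ i j, h i - h j ≤ M) :
    ∑' j, ENNReal.ofReal (f j) ≤ ENNReal.ofReal M := by
  rw [ENNReal.tsum_eq_iSup_sum]
  refine iSup_le fun s => ?_
  obtain ⟨n, hn⟩ : ∃ n : ℤ, n = s.sup Int.natAbs := ⟨_, rfl⟩
  have hs : s ⊆ Finset.Ico (-n) (n + 1) := fun j hj => by
    have := Finset.le_sup (f := Int.natAbs) hj
    rw [Finset.mem_Ico]; omega
  calc ∑ j ∈ s, ENNReal.ofReal (f j) ≤ ∑ j ∈ Finset.Ico (-n) (n + 1), ENNReal.ofReal (f j) :=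
        Finset.sum_le_sum_of_subset hs
    _ = ENNReal.ofReal (∑ j ∈ Finset.Ico (-n) (n + 1), f j) :=
        (ENNReal.ofReal_sum_of_nonneg fun j _ => hf₀ j).symm
    _ ≤ ENNReal.ofReal M := by
        refine ENNReal.ofReal_le_ofReal ((Finset.sum_le_sum fun j _ => hf j).trans ?_)
        rw [Finset.sum_Ico_sub_int h (by omega)]
        exact hM _ _

theorem inv_one_add_abs_sq_le_sub (w : ℝ) :
    ((1 + |w|) ^ 2)⁻¹ ≤ 2 * ((w + 1) / (1 + |w + 1|) - w / (1 + |w|)) := by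
  have hp : 0 < 1 + |w| := by positivity
  have hq : 0 < 1 + |w + 1| := by positivity
  have hnum : 1 ≤ (w + 1) * (1 + |w|) - (1 + |w + 1|) * w := by
    rcases le_total 0 w with hw | hw <;> rcases le_total 0 (w + 1) with hw' | hw' <;>
      simp only [abs_of_nonneg, abs_of_nonpos, *] <;> nlinarith
  have hden : (1 + |w + 1|) * (1 + |w|) ≤ 2 * (1 + |w|) ^ 2 := by
    have : 1 + |w + 1| ≤ 2 * (1 + |w|) := by
      linarith [abs_add_le w 1, abs_nonneg w, abs_one (α := ℝ)]
    nlinarith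
  calc ((1 + |w|) ^ 2)⁻¹ = 2 * (1 / (2 * (1 + |w|) ^ 2)) := by field_simp
    _ ≤ 2 * (1 / ((1 + |w + 1|) * (1 + |w|))) := by gcongr
    _ ≤ 2 * (((w + 1) * (1 + |w|) - (1 + |w + 1|) * w) / ((1 + |w + 1|) * (1 + |w|))) := by
        gcongr
    _ = _ := by rw [div_sub_div _ _ hq.ne' hp.ne']

theorem tsum_ofReal_inv_one_add_abs_sub_sq_le (v : ℝ) :
    ∑' k : ℤ, ENNReal.ofReal ((1 + |v - k|) ^ 2)⁻¹ ≤ ENNReal.ofReal 4 := by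
  have hσ : ∀ w : ℝ, |w / (1 + |w|)| ≤ 1 := fun w => by
    rw [abs_div, abs_of_pos (show (0:ℝ) < 1 + |w| by positivity), div_le_one (by positivity)]
    linarith
  refine ENNReal.tsum_ofReal_le_of_telescoping (h := fun k => -2 * ((k - v) / (1 + |k - v|)))
    (fun k => by positivity) (fun k => ?_) (fun i j => ?_)
  · have := inv_one_add_abs_sq_le_sub (k - v)
    rw [abs_sub_comm]
    push_cast
    rw [show (k:ℝ) + 1 - v = k - v + 1 by ring]
    linarith
  · have := abs_le.mp (hσ (i - v))
    have := abs_le.mp (hσ (j - v))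
    linarith

theorem tsum_ofReal_two_zpow_div_add_pow_three_le {D : ℝ} (hD : 0 < D) :
    ∑' j : ℤ, ENNReal.ofReal ((2 : ℝ) ^ j / ((2 : ℝ) ^ j + D) ^ 3)
      ≤ ENNReal.ofReal (4 / (3 * D ^ 2)) := by
  refine ENNReal.tsum_ofReal_le_of_telescoping (h := fun j => 4 / (3 * ((2 : ℝ) ^ j + D) ^ 2))
    (fun j => by positivity) (fun j => ?_) (fun i j => ?_)
  · have hℓ : 0 < (2 : ℝ) ^ j := by positivity
    rw [zpow_add_one₀ two_ne_zero]
    generalize (2 : ℝ) ^ j = ℓ at hℓ ⊢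
    rw [div_sub_div _ _ (by positivity) (by positivity),
      div_le_div_iff₀ (by positivity) (by positivity)]
    nlinarith [mul_pos (mul_pos hℓ hℓ) hD, mul_pos hℓ (mul_pos hD hD)]
  · have : 4 / (3 * ((2 : ℝ) ^ i + D) ^ 2) ≤ 4 / (3 * D ^ 2) := by
      gcongr
      linarith [zpow_pos (two_pos (α := ℝ)) i]
    have : 0 ≤ 4 / (3 * ((2 : ℝ) ^ j + D) ^ 2) := by positivity
    linarith

theorem inv_pow_three_mul_inv_pow_three_le {a b r : ℝ} (ha : 1 ≤ a) (hb : 1 ≤ b) (hr : 0 < r)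
    (hrab : r ≤ a + b) :
    (a ^ 3)⁻¹ * (b ^ 3)⁻¹ ≤ 8 * (r ^ 3)⁻¹ * ((a ^ 2)⁻¹ + (b ^ 2)⁻¹) := by
  wlog hab : a ≤ b generalizing a b
  · rw [mul_comm, add_comm]
    exact this hb ha (by linarith) (by linarith)
  have hr3 : r ^ 3 ≤ 8 * b ^ 3 := by
    calc r ^ 3 ≤ (2 * b) ^ 3 := by gcongr; linarith
      _ = 8 * b ^ 3 := by ring
  calc (a ^ 3)⁻¹ * (b ^ 3)⁻¹ ≤ 8 * (r ^ 3)⁻¹ * (a ^ 2)⁻¹ := by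
        rw [← mul_inv, show 8 * (r ^ 3)⁻¹ * (a ^ 2)⁻¹ = (r ^ 3 * a ^ 2 / 8)⁻¹ by field_simp]
        refine inv_anti₀ (by positivity) ?_
        have : a ^ 2 ≤ a ^ 3 := pow_le_pow_right₀ ha (by norm_num)
        calc r ^ 3 * a ^ 2 / 8 ≤ b ^ 3 * a ^ 2 := by
              linarith [mul_le_mul_of_nonneg_right hr3 (sq_nonneg a)]
          _ ≤ a ^ 3 * b ^ 3 := by rw [mul_comm]; gcongr
    _ ≤ _ := by gcongr; exact le_add_of_nonneg_right (by positivity)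

theorem Real.rpow_neg_natCast_le_inv_pow {ρ : ℝ} (hρ : 1 ≤ ρ) {n N : ℕ} (hnN : n ≤ N) :
    ρ ^ (-(N : ℝ)) ≤ (ρ ^ n)⁻¹ := by
  rw [Real.rpow_neg (zero_le_one.trans hρ), Real.rpow_natCast]
  exact inv_anti₀ (by positivity) (pow_le_pow_right₀ hρ hnN)

theorem Real.sqrt_tsum_le_tsum_sqrt {ι : Type*} {f : ι → ℝ} (hf : ∀ i, 0 ≤ f i)
    (h : Summable fun i => √(f i)) : √(∑' i, f i) ≤ ∑' i, √(f i) := by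
  set T := ∑' i, √(f i)
  have hle : ∀ i, f i ≤ T * √(f i) := fun i =>
    calc f i = √(f i) * √(f i) := (Real.mul_self_sqrt (hf i)).symm
      _ ≤ T * √(f i) := by gcongr; exact h.le_tsum i fun j _ => Real.sqrt_nonneg _
  rw [Real.sqrt_le_iff]
  refine ⟨tsum_nonneg fun i => Real.sqrt_nonneg _, ?_⟩
  calc ∑' i, f i ≤ ∑' i, T * √(f i) :=
        (h.mul_left T).of_nonneg_of_le hf hle |>.tsum_le_tsum hle (h.mul_left T)
    _ = T ^ 2 := by rw [tsum_mul_left, sq]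

theorem ENNReal.ofReal_sqrt_tsum_le {ι : Type*} {f : ι → ℝ} (hf : ∀ i, 0 ≤ f i) :
    ENNReal.ofReal √(∑' i, f i) ≤ ∑' i, ENNReal.ofReal √(f i) := by
  by_cases h : ∑' i, ENNReal.ofReal √(f i) = ⊤
  · exact h ▸ le_top
  have hs : Summable fun i => √(f i) := by
    simpa [ENNReal.toReal_ofReal (Real.sqrt_nonneg _)] using ENNReal.summable_toReal h
  rw [← ENNReal.ofReal_tsum_of_nonneg (fun i => Real.sqrt_nonneg _) hs]
  exact ENNReal.ofReal_le_ofReal (Real.sqrt_tsum_le_tsum_sqrt hf hs)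

theorem MeasureTheory.lintegral_sqrt_tsum_indicator_le {α ι : Type*} [MeasurableSpace α]
    [Countable ι] (μ : Measure α) {s : ι → Set α} (hs : ∀ i, MeasurableSet (s i)) {c : ι → ℝ}
    (hc : ∀ i, 0 ≤ c i) :
    ∫⁻ y, ENNReal.ofReal √(∑' i, c i * (s i).indicator (fun _ => (1 : ℝ)) y) ∂μ
      ≤ ∑' i, ENNReal.ofReal √(c i) * μ (s i) := by
  calc _ ≤ ∫⁻ y, ∑' i, (s i).indicator (fun _ => ENNReal.ofReal √(c i)) y ∂μ := by
        refine lintegral_mono fun y => (ENNReal.ofReal_sqrt_tsum_le fun i => ?_).trans_eq ?_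
        · exact mul_nonneg (hc i) (Set.indicator_nonneg (fun _ _ => zero_le_one) y)
        · congr 1 with i
          by_cases hy : y ∈ s i <;> simp [hy]
    _ = ∑' i, ENNReal.ofReal √(c i) * μ (s i) := by
        rw [lintegral_tsum fun i => (measurable_const.indicator (hs i)).aemeasurable]
        simp_rw [lintegral_indicator_const (hs _)]

theorem MeasureTheory.integral_le_of_lintegral_enorm_le {α : Type*} [MeasurableSpace α]
    {μ : Measure α} {f : α → ℝ} {C : ℝ} (hC : 0 ≤ C)
    (h : ∫⁻ y, ‖f y‖ₑ ∂μ ≤ ENNReal.ofReal C) : ∫ y, f y ∂μ ≤ C := by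
  have := (enorm_integral_le_lintegral_enorm f).trans h
  rw [← ofReal_norm, ENNReal.ofReal_le_ofReal_iff hC, Real.norm_eq_abs] at this
  exact (le_abs_self _).trans this

namespace DyadicI

@[simps]
def equivProd : DyadicI ≃ ℤ × ℤ where
  toFun I := (I.j, I.k)
  invFun p := ⟨p.1, p.2⟩

instance : Countable DyadicI := Countable.of_equiv _ equivProd.symm

noncomputable def relDist (I : DyadicI) (x : ℝ) : ℝ := 1 + I.len⁻¹ * |x - I.center|

theorem len_pos (I : DyadicI) : 0 < I.len := zpow_pos two_pos _

theorem one_le_relDist (I : DyadicI) (x : ℝ) : 1 ≤ I.relDist x :=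
  le_add_of_nonneg_right (mul_nonneg (inv_nonneg.mpr I.len_pos.le) (abs_nonneg _))

theorem relDist_eq (I : DyadicI) (x : ℝ) : I.relDist x = 1 + |(x / I.len - 1 / 2) - I.k| := by
  rw [relDist, ← abs_of_pos (inv_pos.mpr I.len_pos), ← abs_mul, center, len]
  congr 2
  field_simp
  ring

theorem one_add_len_inv_mul_abs_sub_le_relDist_add (I : DyadicI) (x t : ℝ) :
    1 + I.len⁻¹ * |x - t| ≤ I.relDist x + I.relDist t := by
  have hℓ := I.len_pos
  have : I.len⁻¹ * |x - t| ≤ I.len⁻¹ * |x - I.center| + I.len⁻¹ * |t - I.center| := by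
    rw [← mul_add]
    gcongr
    exact (abs_sub_le x I.center t).trans_eq (by rw [abs_sub_comm I.center t])
  unfold relDist
  linarith

theorem volume_toSet (I : DyadicI) : volume I.toSet = ENNReal.ofReal I.len := by
  rw [toSet, Real.volume_Ico, len]
  ring_nf

theorem sqrt_div_len_mul_len_le {N : ℕ} (hN : 3 ≤ N) (I : DyadicI) {a b x t : ℝ}
    (ha : |a| ≤ I.len ^ (-(2 : ℝ)) * I.relDist t ^ (-(N : ℝ)))
    (hb : |b| ≤ I.len ^ (-(1 / 2 : ℝ)) * I.relDist x ^ (-(N : ℝ))) :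
    √(a ^ 2 * b ^ 2 / I.len) * I.len
      ≤ (I.len ^ 2)⁻¹ * (I.relDist t ^ 3)⁻¹ * (I.relDist x ^ 3)⁻¹ := by
  have hℓ := I.len_pos
  have hρt := I.one_le_relDist t
  have hρx := I.one_le_relDist x
  calc √(a ^ 2 * b ^ 2 / I.len) * I.len = |a| * (|b| * √I.len) := by
        rw [Real.sqrt_div' _ hℓ.le, Real.sqrt_mul (sq_nonneg a), Real.sqrt_sq_eq_abs,
          Real.sqrt_sq_eq_abs, div_mul_eq_mul_div, mul_div_assoc, Real.div_sqrt, mul_assoc]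
    _ ≤ (I.len ^ (-(2 : ℝ)) * I.relDist t ^ (-(N : ℝ)))
          * (I.len ^ (-(1 / 2 : ℝ)) * I.relDist x ^ (-(N : ℝ)) * √I.len) := by gcongr
    _ = (I.len ^ 2)⁻¹ * I.relDist t ^ (-(N : ℝ)) * I.relDist x ^ (-(N : ℝ)) := by
        rw [Real.sqrt_eq_rpow, Real.rpow_neg hℓ.le, Real.rpow_neg hℓ.le, Real.rpow_two]
        field_simp
    _ ≤ _ := by
        gcongr
        · exact Real.rpow_neg_natCast_le_inv_pow hρt hN
        · exact Real.rpow_neg_natCast_le_inv_pow hρx hN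

theorem tsum_ofReal_inv_relDist_sq_le (j : ℤ) (x : ℝ) :
    ∑' k : ℤ, ENNReal.ofReal ((relDist ⟨j, k⟩ x) ^ 2)⁻¹ ≤ ENNReal.ofReal 4 := by
  have (k : ℤ) : relDist ⟨j, k⟩ x = 1 + |(x / (2 : ℝ) ^ j - 1 / 2) - k| := relDist_eq _ x
  simp_rw [this]
  exact tsum_ofReal_inv_one_add_abs_sub_sq_le _

theorem tsum_ofReal_inv_len_sq_mul_relDist_le {x t : ℝ} (hxt : x ≠ t) :
    ∑' I : DyadicI, ENNReal.ofReal ((I.len ^ 2)⁻¹ * (I.relDist t ^ 3)⁻¹ * (I.relDist x ^ 3)⁻¹)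
      ≤ ENNReal.ofReal (256 / 3 / |x - t| ^ 2) := by
  set D := |x - t|
  have hD : 0 < D := abs_pos.mpr (sub_ne_zero.mpr hxt)
  set w : ℤ → ℝ := fun j => (2 : ℝ) ^ j / ((2 : ℝ) ^ j + D) ^ 3
  have hterm : ∀ I : DyadicI, (I.len ^ 2)⁻¹ * (I.relDist t ^ 3)⁻¹ * (I.relDist x ^ 3)⁻¹
      ≤ 8 * w I.j * ((I.relDist x ^ 2)⁻¹ + (I.relDist t ^ 2)⁻¹) := fun I => by
    have hℓ := I.len_pos
    calc (I.len ^ 2)⁻¹ * (I.relDist t ^ 3)⁻¹ * (I.relDist x ^ 3)⁻¹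
        = (I.len ^ 2)⁻¹ * ((I.relDist x ^ 3)⁻¹ * (I.relDist t ^ 3)⁻¹) := by ring
      _ ≤ (I.len ^ 2)⁻¹ * (8 * ((1 + I.len⁻¹ * D) ^ 3)⁻¹
            * ((I.relDist x ^ 2)⁻¹ + (I.relDist t ^ 2)⁻¹)) := by
          refine mul_le_mul_of_nonneg_left ?_ (by positivity)
          exact inv_pow_three_mul_inv_pow_three_le (I.one_le_relDist x) (I.one_le_relDist t)
            (by positivity) (I.one_add_len_inv_mul_abs_sub_le_relDist_add x t)
      _ = _ := by simp only [w, len] at hℓ ⊢; field_simp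
  calc ∑' I : DyadicI, ENNReal.ofReal ((I.len ^ 2)⁻¹ * (I.relDist t ^ 3)⁻¹ * (I.relDist x ^ 3)⁻¹)
      ≤ ∑' I : DyadicI, ENNReal.ofReal (8 * w I.j)
          * (ENNReal.ofReal (I.relDist x ^ 2)⁻¹ + ENNReal.ofReal (I.relDist t ^ 2)⁻¹) := by
        refine ENNReal.tsum_le_tsum fun I => (ENNReal.ofReal_le_ofReal (hterm I)).trans_eq ?_
        rw [ENNReal.ofReal_mul (by positivity), ENNReal.ofReal_add (by positivity) (by positivity)]
    _ = ∑' j : ℤ, ENNReal.ofReal (8 * w j) * ∑' k : ℤ,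
          (ENNReal.ofReal (relDist ⟨j, k⟩ x ^ 2)⁻¹ + ENNReal.ofReal (relDist ⟨j, k⟩ t ^ 2)⁻¹) := by
        rw [← equivProd.symm.tsum_eq, ENNReal.tsum_prod']
        simp only [equivProd_symm_apply_j, ENNReal.tsum_mul_left]
        rfl
    _ ≤ ∑' j : ℤ, ENNReal.ofReal (8 * w j) * (ENNReal.ofReal 4 + ENNReal.ofReal 4) := by
        gcongr with j
        rw [ENNReal.tsum_add]
        exact add_le_add (tsum_ofReal_inv_relDist_sq_le j x) (tsum_ofReal_inv_relDist_sq_le j t)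
    _ = ENNReal.ofReal 64 * ∑' j : ℤ, ENNReal.ofReal (w j) := by
        rw [← ENNReal.tsum_mul_left]
        congr 1 with j
        rw [← ENNReal.ofReal_add (by norm_num) (by norm_num),
          ← ENNReal.ofReal_mul (by positivity), ← ENNReal.ofReal_mul (by norm_num)]
        congr 1
        ring
    _ ≤ ENNReal.ofReal 64 * ENNReal.ofReal (4 / (3 * D ^ 2)) := by
        gcongr
        exact tsum_ofReal_two_zpow_div_add_pow_three_le hD
    _ = ENNReal.ofReal (256 / 3 / D ^ 2) := by
        rw [← ENNReal.ofReal_mul (by norm_num)]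
        congr 1
        field_simp
        ring

end DyadicI

/-- kernel smoothness estimate: with the additional derivative bounds
`|φ_I'(t)| ≤ |I|^{-2}(1+|I|^{-1}|t−c(I)|)^{-N}`, the `L¹` norm in `y` of the square function
built from `φ_I'` is bounded by `C/|x−t|²`. -/
theorem statement9 (N : ℕ) (hN : 3 ≤ N) :
    ∃ C : ℝ, 0 < C ∧
    ∀ ψ φ : DyadicI → ℝ → ℝ,
      (∀ (I : DyadicI) (x : ℝ),
        |ψ I x| ≤ I.len ^ (-(1/2 : ℝ)) * (1 + I.len⁻¹ * |x - I.center|) ^ (-(N : ℝ))) →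
      (∀ (I : DyadicI) (x : ℝ),
        |φ I x| ≤ I.len⁻¹ * (1 + I.len⁻¹ * |x - I.center|) ^ (-(N : ℝ))) →
      (∀ I : DyadicI, Differentiable ℝ (φ I)) →
      (∀ (I : DyadicI) (t : ℝ),
        |deriv (φ I) t| ≤ I.len ^ (-(2 : ℝ)) * (1 + I.len⁻¹ * |t - I.center|) ^ (-(N : ℝ))) →
      ∀ x t : ℝ, x ≠ t →
        (∫ y, Real.sqrt (∑' I : DyadicI,
            (deriv (φ I) t) ^ 2 * (ψ I x) ^ 2 *
              Set.indicator I.toSet (fun _ => (1 : ℝ)) y / I.len)) ≤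
          C / |x - t| ^ 2 := by
  refine ⟨256 / 3, by norm_num, fun ψ φ hψ _ _ hφ' x t hxt => ?_⟩
  refine integral_le_of_lintegral_enorm_le (by positivity) ?_
  calc ∫⁻ y, ‖√(∑' I : DyadicI, deriv (φ I) t ^ 2 * ψ I x ^ 2
          * Set.indicator I.toSet (fun _ => (1 : ℝ)) y / I.len)‖ₑ
      = ∫⁻ y, ENNReal.ofReal √(∑' I : DyadicI, deriv (φ I) t ^ 2 * ψ I x ^ 2 / I.len
          * Set.indicator I.toSet (fun _ => (1 : ℝ)) y) := by
        simp_rw [Real.enorm_of_nonneg (Real.sqrt_nonneg _), mul_div_right_comm]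
    _ ≤ ∑' I : DyadicI, ENNReal.ofReal √(deriv (φ I) t ^ 2 * ψ I x ^ 2 / I.len) * volume I.toSet :=
        lintegral_sqrt_tsum_indicator_le volume (fun I => measurableSet_Ico)
          (fun I => div_nonneg (by positivity) I.len_pos.le)
    _ ≤ ∑' I : DyadicI, ENNReal.ofReal
          ((I.len ^ 2)⁻¹ * (I.relDist t ^ 3)⁻¹ * (I.relDist x ^ 3)⁻¹) := by
        refine ENNReal.tsum_le_tsum fun I => ?_
        rw [I.volume_toSet, ← ENNReal.ofReal_mul (Real.sqrt_nonneg _)]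
        exact ENNReal.ofReal_le_ofReal (I.sqrt_div_len_mul_len_le hN (hφ' I t) (hψ I x))
    _ ≤ ENNReal.ofReal (256 / 3 / |x - t| ^ 2) := DyadicI.tsum_ofReal_inv_len_sq_mul_relDist_le hxt
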